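/- Let H be a ℤ-graded bialgebra over a field k satisfying the twisting conditions and α = {α_i}_{i∈ℤ} a system of twisting functionals on H with convolution inverses {α_i^{-1}}. Let A be a ℤ-graded k-algebra and ρ : A → A⊗H a k-algebra homomorphism (ρ(1) = 1⊗1 and ρ(ab) = ρ(a)ρ(b)) such that (id_A⊗ε)∘ρ = id_A, (ρ⊗id_H)∘ρ = (id_A⊗Δ)∘ρ, and ρ(A_n) ⊆ A_n⊗H_n for all n ∈ ℤ. Define τ_i : A → A by τ_i(a) = Σ a_0·α_i(a_1), where ρ(a) = Σ a_0⊗a_1. Then {τ_i}_{i∈ℤ} is a twisting system of A, and each τ_i is bijective with inverse a ↦ Σ a_0·α_i^{-1}(a_1). -/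

import Mathlib

open TensorProduct

/-- Convolution product of linear functionals on a coalgebra. -/
noncomputable def conv {k B : Type*} [CommSemiring k] [AddCommMonoid B] [Module k B]
    [Coalgebra k B] (f g : B →ₗ[k] k) : B →ₗ[k] k :=
  LinearMap.mul' k k ∘ₗ TensorProduct.map f g ∘ₗ Coalgebra.comul

/-- A twisting system of a ℤ-graded algebra. -/
def IsTwistingSystem {k A : Type*} [CommSemiring k] [Semiring A] [Algebra k A]
    (𝒜 : ℤ → Submodule k A) (τ : ℤ → (A →ₗ[k] A)) : Prop :=
  (∀ i : ℤ, Function.Bijective (τ i)) ∧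
  (∀ (i n : ℤ), ∀ a ∈ 𝒜 n, τ i a ∈ 𝒜 n) ∧
  (τ 0 = LinearMap.id) ∧
  (∀ i : ℤ, τ i 1 = 1) ∧
  (∀ (i j : ℤ), ∀ a ∈ 𝒜 j, ∀ b : A, τ i (a * τ j b) = τ i a * τ (i + j) b)

/-- The map `a ↦ Σ a_0 · π(a_1)` built from a coaction `ρ : A → A ⊗ H` and a functional
`π : H → k`. -/
noncomputable def coactTwist {k H A : Type*} [CommSemiring k] [AddCommMonoid H] [Module k H]
    [AddCommMonoid A] [Module k A] (ρ : A →ₗ[k] A ⊗[k] H) (π : H →ₗ[k] k) : A →ₗ[k] A :=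
  (TensorProduct.rid k A).toLinearMap ∘ₗ TensorProduct.map LinearMap.id π ∘ₗ ρ

/-!
Write `τ_π` for `coactTwist ρ π`. Coassociativity gives `ρ ∘ τ_π = (id ⊗ τ^H_π) ∘ ρ`, where
`τ^H_π h = Σ h₁ π(h₂)` is the twist of the regular coaction `Δ`, and hence
`τ_π ∘ τ_π' = τ_{π * π'}`; with `τ_ε = id` this makes `τ_{α⁻¹_i}` inverse to `τ_{α_i}`.
Since `ρ` is multiplicative, `τ_i (a τ_j b)` becomes `Σ a₀ b₀ α_i(a₁ τ^H_{α_j} b₁)`, and the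
twisting identity of `α` is exactly `α_i(g τ^H_{α_j} h) = α_i(g) α_{i+j}(h)` for `g` of degree `j`.
-/

noncomputable def evalRight {k H M : Type*} [CommSemiring k] [AddCommMonoid H]
    [Module k H] [AddCommMonoid M] [Module k M] (π : H →ₗ[k] k) : M ⊗[k] H →ₗ[k] M :=
  (TensorProduct.rid k M).toLinearMap ∘ₗ TensorProduct.map LinearMap.id π

section Module

variable {k H M N P : Type*} [CommSemiring k] [AddCommMonoid H] [Module k H]
  [AddCommMonoid M] [Module k M] [AddCommMonoid N] [Module k N] [AddCommMonoid P] [Module k P]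

@[simp]
theorem evalRight_tmul (π : H →ₗ[k] k) (m : M) (h : H) :
    evalRight π (m ⊗ₜ h) = π h • m := by
  simp [evalRight]

theorem coactTwist_eq_evalRight_comp (ρ : M →ₗ[k] M ⊗[k] H) (π : H →ₗ[k] k) :
    coactTwist ρ π = evalRight π ∘ₗ ρ :=
  rfl

theorem evalRight_comp_map (π : H →ₗ[k] k) (f : N →ₗ[k] M) (g : P →ₗ[k] H) :
    evalRight π ∘ₗ TensorProduct.map f g = f ∘ₗ evalRight (π ∘ₗ g) :=
  TensorProduct.ext' fun n p => by simp

theorem evalRight_comp_assoc_symm (π : H →ₗ[k] k) :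
    evalRight π ∘ₗ (TensorProduct.assoc k M H H).symm.toLinearMap =
      TensorProduct.map LinearMap.id (evalRight π) := by
  ext m h h'
  simp

theorem coactTwist_mem (ρ : M →ₗ[k] M ⊗[k] H) (π : H →ₗ[k] k) (p : Submodule k M)
    (g : P →ₗ[k] H) {a : M} (ha : ρ a ∈ LinearMap.range (TensorProduct.map p.subtype g)) :
    coactTwist ρ π a ∈ p := by
  obtain ⟨s, hs⟩ := ha
  rw [coactTwist_eq_evalRight_comp, LinearMap.comp_apply, ← hs, ← LinearMap.comp_apply,
    evalRight_comp_map]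
  exact (evalRight (π ∘ₗ g) s).2

end Module

section Coalgebra

variable {k H A : Type*} [CommSemiring k] [AddCommMonoid H] [Module k H] [Coalgebra k H]
  [AddCommMonoid A] [Module k A]

theorem conv_eq_comp_coactTwist_comul (f g : H →ₗ[k] k) :
    conv f g = f ∘ₗ coactTwist Coalgebra.comul g := by
  have hmul : LinearMap.mul' k k ∘ₗ TensorProduct.map f g = f ∘ₗ evalRight g :=
    TensorProduct.ext' fun x y => by simp [mul_comm]
  rw [conv, coactTwist_eq_evalRight_comp, ← LinearMap.comp_assoc, hmul, LinearMap.comp_assoc]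

theorem coactTwist_counit (ρ : A →ₗ[k] A ⊗[k] H)
    (hcounit : ∀ a : A,
      (TensorProduct.rid k A) ((TensorProduct.map LinearMap.id Coalgebra.counit) (ρ a)) = a) :
    coactTwist ρ Coalgebra.counit = LinearMap.id :=
  LinearMap.ext hcounit

theorem comp_coactTwist (ρ : A →ₗ[k] A ⊗[k] H)
    (hcoassoc : ∀ a : A,
      (TensorProduct.assoc k A H H) ((TensorProduct.map ρ LinearMap.id) (ρ a)) =
        (TensorProduct.map LinearMap.id Coalgebra.comul) (ρ a))
    (π : H →ₗ[k] k) :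
    ρ ∘ₗ coactTwist ρ π = TensorProduct.map LinearMap.id (coactTwist Coalgebra.comul π) ∘ₗ ρ := by
  ext a
  have hρ : TensorProduct.map ρ LinearMap.id (ρ a) =
      (TensorProduct.assoc k A H H).symm (TensorProduct.map LinearMap.id Coalgebra.comul (ρ a)) :=
    (LinearEquiv.eq_symm_apply _).mpr (hcoassoc a)
  calc ρ (evalRight π (ρ a))
      = evalRight π (TensorProduct.map ρ LinearMap.id (ρ a)) := by
        simpa using congrArg (· (ρ a)) (evalRight_comp_map π ρ LinearMap.id).symm
    _ = TensorProduct.map LinearMap.id (evalRight π)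
          (TensorProduct.map LinearMap.id Coalgebra.comul (ρ a)) := by
        rw [hρ, ← evalRight_comp_assoc_symm]; rfl
    _ = _ := by rw [← LinearMap.comp_apply, ← TensorProduct.map_comp]; rfl

theorem coactTwist_comp_coactTwist (ρ : A →ₗ[k] A ⊗[k] H)
    (hcoassoc : ∀ a : A,
      (TensorProduct.assoc k A H H) ((TensorProduct.map ρ LinearMap.id) (ρ a)) =
        (TensorProduct.map LinearMap.id Coalgebra.comul) (ρ a))
    (π π' : H →ₗ[k] k) :
    coactTwist ρ π ∘ₗ coactTwist ρ π' = coactTwist ρ (conv π π') := by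
  rw [coactTwist_eq_evalRight_comp ρ π, LinearMap.comp_assoc, comp_coactTwist ρ hcoassoc,
    ← LinearMap.comp_assoc, evalRight_comp_map, LinearMap.id_comp,
    ← conv_eq_comp_coactTwist_comul]
  rfl

end Coalgebra

section Algebra

variable {k H A : Type*} [CommSemiring k] [Semiring H] [Bialgebra k H] [Semiring A]
  [Algebra k A]

theorem coactTwist_one (ρ : A →ₐ[k] A ⊗[k] H) {π : H →ₗ[k] k} (hπ : π 1 = 1) :
    coactTwist ρ.toLinearMap π 1 = 1 := by
  simp [coactTwist_eq_evalRight_comp, Algebra.TensorProduct.one_def, hπ]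

theorem evalRight_tmul_mul_map_coactTwist {f g fg : H →ₗ[k] k} {h : H}
    (hh : ∀ b : H, f (h * coactTwist Coalgebra.comul g b) = f h * fg b) (x : A)
    (u : A ⊗[k] H) :
    evalRight f ((x ⊗ₜ h) * TensorProduct.map LinearMap.id (coactTwist Coalgebra.comul g) u) =
      evalRight f (x ⊗ₜ h) * evalRight fg u := by
  induction u using TensorProduct.induction_on with
  | zero => simp
  | tmul y b =>
    simp [Algebra.TensorProduct.tmul_mul_tmul, hh, smul_smul, mul_comm]
  | add u v hu hv => simp only [map_add, mul_add, hu, hv]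

theorem coactTwist_mul_coactTwist (ρ : A →ₐ[k] A ⊗[k] H)
    (hcoassoc : ∀ a : A,
      (TensorProduct.assoc k A H H) ((TensorProduct.map ρ.toLinearMap LinearMap.id) (ρ a)) =
        (TensorProduct.map LinearMap.id Coalgebra.comul) (ρ a))
    (p : Submodule k A) (q : Submodule k H) {f g fg : H →ₗ[k] k}
    (hq : ∀ h ∈ q, ∀ b : H, conv (f ∘ₗ LinearMap.mulLeft k h) g b = f h * fg b)
    {a : A} (ha : ρ a ∈ LinearMap.range (TensorProduct.map p.subtype q.subtype)) (b : A) :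
    coactTwist ρ.toLinearMap f (a * coactTwist ρ.toLinearMap g b) =
      coactTwist ρ.toLinearMap f a * coactTwist ρ.toLinearMap fg b := by
  obtain ⟨s, hs⟩ := ha
  have hρ := LinearMap.congr_fun (comp_coactTwist ρ.toLinearMap hcoassoc g) b
  rw [coactTwist_eq_evalRight_comp _ f, coactTwist_eq_evalRight_comp _ fg]
  simp only [LinearMap.comp_apply, AlgHom.toLinearMap_apply, map_mul] at hρ ⊢
  rw [hρ, ← hs]
  clear hs
  induction s using TensorProduct.induction_on with
  | zero => simp
  | tmul x h =>
    have hh (b' : H) : f (h * coactTwist Coalgebra.comul g b') = f h * fg b' := by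
      simpa only [conv_eq_comp_coactTwist_comul, LinearMap.comp_apply,
        LinearMap.mulLeft_apply] using hq h h.2 b'
    rw [TensorProduct.map_tmul]
    exact evalRight_tmul_mul_map_coactTwist hh (x : A) (ρ b)
  | add s s' hs hs' => simp only [map_add, add_mul, hs, hs']

end Algebra

theorem statement15_general {k H A : Type*} [Field k] [Ring H] [Bialgebra k H]
    [Ring A] [Algebra k A]
    (ℋ : ℤ → Submodule k H)
    (α αinv : ℤ → (H →ₗ[k] k))
    (hinv : ∀ i : ℤ, conv (α i) (αinv i) = Coalgebra.counit ∧
      conv (αinv i) (α i) = Coalgebra.counit)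
    (hone : ∀ i : ℤ, α i 1 = 1)
    (hzero : α 0 = Coalgebra.counit)
    (hsys : ∀ (i j : ℤ), ∀ a ∈ ℋ j, ∀ b : H,
      conv ((α i) ∘ₗ LinearMap.mulLeft k a) (α j) b = α i a * α (i + j) b)
    (𝒜 : ℤ → Submodule k A)
    (ρ : A →ₐ[k] A ⊗[k] H)
    (hcounit : ∀ a : A,
      (TensorProduct.rid k A) ((TensorProduct.map LinearMap.id Coalgebra.counit) (ρ a)) = a)
    (hcoassoc : ∀ a : A,
      (TensorProduct.assoc k A H H) ((TensorProduct.map ρ.toLinearMap LinearMap.id) (ρ a)) =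
        (TensorProduct.map LinearMap.id Coalgebra.comul) (ρ a))
    (hgr : ∀ n : ℤ, ∀ a ∈ 𝒜 n,
      ρ a ∈ LinearMap.range (TensorProduct.map (𝒜 n).subtype (ℋ n).subtype)) :
    IsTwistingSystem 𝒜 (fun i => coactTwist ρ.toLinearMap (α i)) ∧
    (∀ i : ℤ,
      coactTwist ρ.toLinearMap (α i) ∘ₗ coactTwist ρ.toLinearMap (αinv i) = LinearMap.id ∧
      coactTwist ρ.toLinearMap (αinv i) ∘ₗ coactTwist ρ.toLinearMap (α i) = LinearMap.id) := by
  have hε := coactTwist_counit ρ.toLinearMap hcounit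
  have hinverse (i : ℤ) :
      coactTwist ρ.toLinearMap (α i) ∘ₗ coactTwist ρ.toLinearMap (αinv i) = LinearMap.id ∧
      coactTwist ρ.toLinearMap (αinv i) ∘ₗ coactTwist ρ.toLinearMap (α i) = LinearMap.id := by
    simp only [coactTwist_comp_coactTwist ρ.toLinearMap hcoassoc, (hinv i).1, (hinv i).2, hε,
      and_self]
  refine ⟨⟨fun i => ?_, fun i n a ha => ?_, ?_, fun i => ?_, fun i j a ha b => ?_⟩, hinverse⟩
  · exact Function.bijective_iff_has_inverse.mpr
      ⟨_, fun a => LinearMap.congr_fun (hinverse i).2 a, fun a => LinearMap.congr_fun (hinverse i).1 a⟩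
  · exact coactTwist_mem ρ.toLinearMap (α i) (𝒜 n) (ℋ n).subtype (hgr n a ha)
  · simpa only [hzero] using hε
  · exact coactTwist_one ρ (hone i)
  · exact coactTwist_mul_coactTwist ρ hcoassoc (𝒜 j) (ℋ j) (hsys i j) (hgr j a ha) b

/-- Let `H` be a ℤ-graded bialgebra satisfying the twisting conditions,
`α` a system of twisting functionals on `H` with convolution inverses `αinv`, and `A` a
ℤ-graded `H`-comodule algebra via `ρ` (an algebra map, counital, coassociative, preserving
the grading).  Then `τ_i(a) = Σ a_0 α_i(a_1)` defines a twisting system of `A`, each `τ_i`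
bijective with inverse `a ↦ Σ a_0 αinv_i(a_1)`. -/
theorem statement15 {k H A : Type*} [Field k] [Ring H] [Bialgebra k H]
    [Ring A] [Algebra k A]
    (ℋ : ℤ → Submodule k H) [GradedAlgebra ℋ]
    (hT2 : ∀ n : ℤ, ∀ b ∈ ℋ n,
      Coalgebra.comul (R := k) b ∈ LinearMap.range (TensorProduct.mapIncl (ℋ n) (ℋ n)))
    (α αinv : ℤ → (H →ₗ[k] k))
    (hinv : ∀ i : ℤ, conv (α i) (αinv i) = Coalgebra.counit ∧
      conv (αinv i) (α i) = Coalgebra.counit)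
    (hone : ∀ i : ℤ, α i 1 = 1)
    (hzero : α 0 = Coalgebra.counit)
    (hsys : ∀ (i j : ℤ), ∀ a ∈ ℋ j, ∀ b : H,
      conv ((α i) ∘ₗ LinearMap.mulLeft k a) (α j) b = α i a * α (i + j) b)
    (𝒜 : ℤ → Submodule k A) [GradedAlgebra 𝒜]
    (ρ : A →ₐ[k] A ⊗[k] H)
    (hcounit : ∀ a : A,
      (TensorProduct.rid k A) ((TensorProduct.map LinearMap.id Coalgebra.counit) (ρ a)) = a)
    (hcoassoc : ∀ a : A,
      (TensorProduct.assoc k A H H) ((TensorProduct.map ρ.toLinearMap LinearMap.id) (ρ a)) =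
        (TensorProduct.map LinearMap.id Coalgebra.comul) (ρ a))
    (hgr : ∀ n : ℤ, ∀ a ∈ 𝒜 n,
      ρ a ∈ LinearMap.range (TensorProduct.map (𝒜 n).subtype (ℋ n).subtype)) :
    IsTwistingSystem 𝒜 (fun i => coactTwist ρ.toLinearMap (α i)) ∧
    (∀ i : ℤ,
      coactTwist ρ.toLinearMap (α i) ∘ₗ coactTwist ρ.toLinearMap (αinv i) = LinearMap.id ∧
      coactTwist ρ.toLinearMap (αinv i) ∘ₗ coactTwist ρ.toLinearMap (α i) = LinearMap.id) :=
  statement15_general ℋ α αinv hinv hone hzero hsys 𝒜 ρ hcounit hcoassoc hgr
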